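/- arXiv:1805.01605 — 2 statements merged into one kernel-verified Lean document; each statement's English description precedes it below -/
import Mathlib

section
/- Let M ∈ ℝ^{p × n}, y ∈ ℝ^p, and define F : ℝ^n → ℝ by F(x) = (1/2)‖Mx − y‖₂². Let G : ℝ^n → ℝ ∪ {+∞} be a proper, convex, lower semicontinuous function such that F + G attains its minimum on ℝ^n. Fix μ > 0, s ∈ (0,2), and z₀ ∈ ℝ^n, and suppose sequences (n_k), (z̃_k), (z_k) in ℝ^n satisfy for every k: (i) n_k = (MᵀM + μI)⁻¹ (Mᵀy + μ z_k); (ii) z̃_k is a minimizer of z ↦ (μ/2)‖(2n_k − z_k) − z‖₂² + G(z); and (iii) z_{k+1} = z_k + s (z̃_k − n_k). Then the sequence (n_k) converges to a minimizer of F + G. -/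
/-!
Here `n_k = J z_k` with `J = leastSquaresProx M y μ` the proximal map of `F / μ`. Call `z` a
fixed point when `μ (J z - z)` is a subgradient of `G` at `J z`; then `J z` minimizes `F + G`,
and a minimizer `x` yields the fixed point `x + μ⁻¹ ∇F(x)`. Monotonicity of the subdifferentials
of `F` and `G` gives the Fejér inequality
`‖z_{k+1} - z‖² ≤ ‖z_k - z‖² - s (2 - s) ‖z̃_k - n_k‖²` for every fixed point `z`. Hence `(z_k)`
is bounded and `z̃_k - n_k → 0`; by lower semicontinuity of `G` every cluster point of `(z_k)` is
a fixed point, and Fejér monotonicity (Opial's argument) upgrades this to convergence of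
`(z_k)`, hence of `n_k = J z_k`.
-/

open Matrix Finset Filter Topology

section DotProduct

variable {ι : Type*} [Fintype ι]

lemma dotProduct_self_nonneg (v : ι → ℝ) : 0 ≤ v ⬝ᵥ v := by
  simpa using dotProduct_self_star_nonneg v

lemma sum_sq_sub_eq_dotProduct (a b : ι → ℝ) :
    ∑ j, (a j - b j) ^ 2 = (a - b) ⬝ᵥ (a - b) := by
  simp [dotProduct, sq]

lemma norm_le_sqrt_dotProduct_self (v : ι → ℝ) : ‖v‖ ≤ √(v ⬝ᵥ v) :=
  (pi_norm_le_iff_of_nonneg (Real.sqrt_nonneg _)).mpr fun j => by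
    rw [Real.norm_eq_abs]
    exact Real.abs_le_sqrt (by
      simpa [dotProduct, sq] using
        Finset.single_le_sum (fun i _ => mul_self_nonneg (v i)) (Finset.mem_univ j))

lemma tendsto_of_dotProduct_self_sub_tendsto_zero {α : Type*} {l : Filter α}
    {x : α → ι → ℝ} {p : ι → ℝ}
    (h : Tendsto (fun k => (x k - p) ⬝ᵥ (x k - p)) l (𝓝 0)) : Tendsto x l (𝓝 p) := by
  rw [tendsto_iff_norm_sub_tendsto_zero]
  refine squeeze_zero (fun _ => norm_nonneg _) (fun k => norm_le_sqrt_dotProduct_self _) ?_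
  simpa using h.sqrt

/-- Opial's lemma in finite dimension. -/
theorem exists_tendsto_of_antitone_dotProduct_self_sub {x : ℕ → ι → ℝ} {S : Set (ι → ℝ)}
    (hS : S.Nonempty) (hfejer : ∀ p ∈ S, Antitone fun k => (x k - p) ⬝ᵥ (x k - p))
    (hcluster : ∀ p (φ : ℕ → ℕ), StrictMono φ → Tendsto (x ∘ φ) atTop (𝓝 p) → p ∈ S) :
    ∃ p ∈ S, Tendsto x atTop (𝓝 p) := by
  obtain ⟨p₀, hp₀⟩ := hS
  have hbdd : ∀ k, x k ∈ Metric.closedBall p₀ √((x 0 - p₀) ⬝ᵥ (x 0 - p₀)) := fun k =>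
    (norm_le_sqrt_dotProduct_self _).trans (Real.sqrt_le_sqrt (hfejer p₀ hp₀ (Nat.zero_le k)))
  obtain ⟨p, -, φ, hφ, hxφ⟩ := tendsto_subseq_of_bounded Metric.isBounded_closedBall hbdd
  have hp := hcluster p φ hφ hxφ
  refine ⟨p, hp, tendsto_of_dotProduct_self_sub_tendsto_zero ?_⟩
  refine (tendsto_iff_tendsto_subseq_of_antitone (hfejer p hp) hφ.tendsto_atTop).mpr ?_
  have hcont : Continuous fun v : ι → ℝ => (v - p) ⬝ᵥ (v - p) := by fun_prop
  have := (hcont.tendsto p).comp hxφ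
  rwa [sub_self, dotProduct_zero] at this

end DotProduct

theorem tendsto_zero_of_le_sub_mul {Q D : ℕ → ℝ} {c : ℝ} (h : ∀ k, Q (k + 1) ≤ Q k - c * D k)
    (hc : 0 < c) (hQ : ∀ k, 0 ≤ Q k) (hD : ∀ k, 0 ≤ D k) : Tendsto D atTop (𝓝 0) := by
  have hsum : ∀ K, ∑ k ∈ range K, c * D k ≤ Q 0 - Q K := by
    intro K
    induction K with
    | zero => simp
    | succ K ih => rw [sum_range_succ]; linarith [h K]
  have hcD : Summable fun k => c * D k :=
    summable_of_sum_range_le (fun k => mul_nonneg hc.le (hD k))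
      fun K => (hsum K).trans (sub_le_self _ (hQ K))
  exact ((summable_mul_left_iff hc.ne').mp hcD).tendsto_atTop_zero

theorem Convex.apply_add_smul_sub_le_of_epigraph {E : Type*} [AddCommGroup E] [Module ℝ E]
    {G : E → EReal} (hG : Convex ℝ {q : E × ℝ | G q.1 ≤ q.2}) {x z : E} {a b t : ℝ}
    (hx : G x ≤ a) (hz : G z ≤ b) (ht₀ : 0 ≤ t) (ht₁ : t ≤ 1) :
    G (x + t • (z - x)) ≤ ((1 - t) * a + t * b : ℝ) := by
  have h := hG (x := (x, a)) (y := (z, b)) hx hz (sub_nonneg.mpr ht₁) ht₀ (by ring)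
  have hpt : x + t • (z - x) = (1 - t) • x + t • z := by module
  simpa [hpt] using h

section Subgradient

variable {ι : Type*} [Fintype ι]

def IsSubgradientAt (f : (ι → ℝ) → EReal) (u g : ι → ℝ) : Prop :=
  ∃ r : ℝ, f u = r ∧ ∀ z, ((r + g ⬝ᵥ (z - u) : ℝ) : EReal) ≤ f z

lemma isSubgradientAt_coe_iff {f : (ι → ℝ) → ℝ} {u g : ι → ℝ} :
    IsSubgradientAt (fun x => (f x : EReal)) u g ↔ ∀ z, f u + g ⬝ᵥ (z - u) ≤ f z := by
  simp only [IsSubgradientAt, EReal.coe_eq_coe_iff, exists_eq_left', EReal.coe_le_coe_iff]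

namespace IsSubgradientAt

variable {f : (ι → ℝ) → EReal} {u v g h : ι → ℝ}

theorem dotProduct_sub_nonneg (hu : IsSubgradientAt f u g) (hv : IsSubgradientAt f v h) :
    0 ≤ (g - h) ⬝ᵥ (u - v) := by
  obtain ⟨r, hr, hur⟩ := hu
  obtain ⟨q, hq, hvq⟩ := hv
  have h₁ : r + g ⬝ᵥ (v - u) ≤ q := EReal.coe_le_coe_iff.mp (hq ▸ hur v)
  have h₂ : q + h ⬝ᵥ (u - v) ≤ r := EReal.coe_le_coe_iff.mp (hr ▸ hvq u)
  have : g ⬝ᵥ (v - u) = -(g ⬝ᵥ (u - v)) := by rw [← dotProduct_neg, neg_sub]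
  rw [sub_dotProduct]
  linarith

theorem add_le_add_of_neg {f' : (ι → ℝ) → EReal} (hf : IsSubgradientAt f u g)
    (hf' : IsSubgradientAt f' u (-g)) (x : ι → ℝ) : f u + f' u ≤ f x + f' x := by
  obtain ⟨r, hr, hfr⟩ := hf
  obtain ⟨q, hq, hfq⟩ := hf'
  calc f u + f' u = ((r + g ⬝ᵥ (x - u) : ℝ) : EReal) + ((q + -g ⬝ᵥ (x - u) : ℝ) : EReal) := by
        rw [hr, hq, ← EReal.coe_add, neg_dotProduct]; congr 1; ring
    _ ≤ f x + f' x := _root_.add_le_add (hfr x) (hfq x)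

theorem of_tendsto (hf : LowerSemicontinuous f) (hu : f u ≠ ⊥) {α : Type*} {l : Filter α}
    [l.NeBot] {u' g' : α → ι → ℝ} (hu' : Tendsto u' l (𝓝 u)) (hg' : Tendsto g' l (𝓝 g))
    (h : ∀ i, IsSubgradientAt f (u' i) (g' i)) : IsSubgradientAt f u g := by
  have key : ∀ z (c : ℝ), f z = c → f u ≤ ((c - g ⬝ᵥ (z - u) : ℝ) : EReal) := by
    intro z c hz
    have hlim : Tendsto (fun i => (u' i, ((c - g' i ⬝ᵥ (z - u' i) : ℝ) : EReal))) l
        (𝓝 (u, ((c - g ⬝ᵥ (z - u) : ℝ) : EReal))) := by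
      have hcont : Continuous fun q : (ι → ℝ) × (ι → ℝ) => c - q.1 ⬝ᵥ (z - q.2) := by fun_prop
      have hreal := (hcont.tendsto (g, u)).comp (hg'.prodMk_nhds hu')
      exact hu'.prodMk_nhds ((continuous_coe_real_ereal.tendsto _).comp hreal)
    refine hf.isClosed_epigraph.mem_of_tendsto hlim (Eventually.of_forall fun i => ?_)
    obtain ⟨r, hr, hi⟩ := h i
    have := EReal.coe_le_coe_iff.mp (hz ▸ hi z)
    show f (u' i) ≤ _
    rw [hr, EReal.coe_le_coe_iff]
    linarith
  obtain ⟨i⟩ := l.nonempty_of_neBot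
  obtain ⟨r, hr, hi⟩ := h i
  have hu_top : f u ≠ ⊤ := ne_top_of_le_ne_top (EReal.coe_ne_top _) (key _ r hr)
  refine ⟨(f u).toReal, (EReal.coe_toReal hu_top hu).symm, fun z => ?_⟩
  rcases eq_or_ne (f z) ⊤ with hz | hz
  · exact hz ▸ le_top
  have hz_bot : f z ≠ ⊥ := ne_bot_of_le_ne_bot (EReal.coe_ne_bot _) (hi z)
  have hle := key z _ (EReal.coe_toReal hz hz_bot).symm
  rw [← EReal.coe_toReal hu_top hu, EReal.coe_le_coe_iff] at hle
  rw [← EReal.coe_toReal hz hz_bot, EReal.coe_le_coe_iff]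
  linarith

end IsSubgradientAt

variable {G : (ι → ℝ) → EReal}

theorem isSubgradientAt_neg_of_isMin_add {φ : (ι → ℝ) → ℝ} {u g : ι → ℝ} (C : (ι → ℝ) → ℝ)
    (hG : Convex ℝ {q : (ι → ℝ) × ℝ | G q.1 ≤ q.2}) (hu : G u ≠ ⊥) (hproper : ∃ x, G x ≠ ⊤)
    (hφ : ∀ d (t : ℝ), φ (u + t • d) ≤ φ u + t * g ⬝ᵥ d + t ^ 2 * C d)
    (hmin : ∀ w, (φ u : EReal) + G u ≤ φ w + G w) : IsSubgradientAt G u (-g) := by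
  obtain ⟨x₀, hx₀⟩ := hproper
  have hu_top : G u ≠ ⊤ := fun h => by
    have := hmin x₀
    rw [h, EReal.coe_add_top, top_le_iff] at this
    exact (EReal.add_lt_top (EReal.coe_ne_top _) hx₀).ne this
  set r := (G u).toReal
  have hr : G u = r := (EReal.coe_toReal hu_top hu).symm
  refine ⟨r, hr, fun z => ?_⟩
  rcases eq_or_ne (G z) ⊤ with hz | hz
  · exact hz ▸ le_top
  have hz_bot : G z ≠ ⊥ := fun h => by
    have := hmin z
    rw [h, EReal.add_bot, le_bot_iff, hr, ← EReal.coe_add] at this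
    exact EReal.coe_ne_bot _ this
  set c := (G z).toReal
  have hc : G z = c := (EReal.coe_toReal hz hz_bot).symm
  have key : ∀ t : ℝ, 0 < t → t ≤ 1 → r ≤ c + g ⬝ᵥ (z - u) + t * C (z - u) := by
    intro t ht₀ ht₁
    have hconv := hG.apply_add_smul_sub_le_of_epigraph hr.le hc.le ht₀.le ht₁
    have h := (hmin _).trans (add_le_add (EReal.coe_le_coe_iff.mpr (hφ (z - u) t)) hconv)
    rw [hr, ← EReal.coe_add, ← EReal.coe_add, EReal.coe_le_coe_iff] at h
    refine le_of_mul_le_mul_left ?_ ht₀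
    linarith
  have hlim : Tendsto (fun t => c + g ⬝ᵥ (z - u) + t * C (z - u)) (𝓝[>] 0)
      (𝓝 (c + g ⬝ᵥ (z - u) + 0 * C (z - u))) :=
    tendsto_const_nhds.add (tendsto_nhdsWithin_of_tendsto_nhds (tendsto_id.mul_const _))
  have hle := ge_of_tendsto hlim (by
    filter_upwards [Ioc_mem_nhdsGT one_pos] with t ht using key t ht.1 ht.2)
  rw [hc, EReal.coe_le_coe_iff, neg_dotProduct]
  linarith

theorem dotProduct_sub_add_smul (a u d : ι → ℝ) (t : ℝ) :
    (a - (u + t • d)) ⬝ᵥ (a - (u + t • d)) =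
      (a - u) ⬝ᵥ (a - u) - 2 * t * (a - u) ⬝ᵥ d + t ^ 2 * d ⬝ᵥ d := by
  rw [← sub_sub]
  generalize a - u = w
  simp only [sub_dotProduct, dotProduct_sub, smul_dotProduct, dotProduct_smul, smul_eq_mul,
    dotProduct_comm d w]
  ring

theorem isSubgradientAt_of_isMin_prox (hG : Convex ℝ {q : (ι → ℝ) × ℝ | G q.1 ≤ q.2})
    (hproper : ∃ x, G x ≠ ⊤) {μ : ℝ} {a u : ι → ℝ} (hu : G u ≠ ⊥)
    (hmin : ∀ w, ((μ / 2 * (a - u) ⬝ᵥ (a - u) : ℝ) : EReal) + G u ≤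
      ((μ / 2 * (a - w) ⬝ᵥ (a - w) : ℝ) : EReal) + G w) :
    IsSubgradientAt G u (μ • (a - u)) := by
  have h := isSubgradientAt_neg_of_isMin_add (φ := fun w => μ / 2 * (a - w) ⬝ᵥ (a - w))
    (g := μ • (u - a)) (fun d => μ / 2 * d ⬝ᵥ d)
    hG hu hproper (fun d t => le_of_eq (by
      have : (a - u) ⬝ᵥ d = -((u - a) ⬝ᵥ d) := by rw [← neg_dotProduct, neg_sub]
      rw [dotProduct_sub_add_smul, smul_dotProduct, smul_eq_mul, this]
      ring)) hmin
  rwa [← smul_neg, neg_sub] at h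

end Subgradient

section LeastSquares

variable {ι κ : Type*} [Fintype ι] [Fintype κ]

noncomputable def leastSquares (M : Matrix κ ι ℝ) (y : κ → ℝ) (x : ι → ℝ) : ℝ :=
  1 / 2 * (M *ᵥ x - y) ⬝ᵥ (M *ᵥ x - y)

theorem leastSquares_add_smul (M : Matrix κ ι ℝ) (y : κ → ℝ) (u d : ι → ℝ) (t : ℝ) :
    leastSquares M y (u + t • d) = leastSquares M y u + t * (Mᵀ *ᵥ (M *ᵥ u - y)) ⬝ᵥ d
      + t ^ 2 * (1 / 2 * (M *ᵥ d) ⬝ᵥ (M *ᵥ d)) := by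
  have h : M *ᵥ (u + t • d) - y = (M *ᵥ u - y) + t • M *ᵥ d := by
    rw [mulVec_add, mulVec_smul]; abel
  rw [leastSquares, leastSquares, h, mulVec_transpose, ← dotProduct_mulVec]
  generalize M *ᵥ u - y = r, M *ᵥ d = e
  simp only [add_dotProduct, dotProduct_add, smul_dotProduct, dotProduct_smul, smul_eq_mul,
    dotProduct_comm e r]
  ring

theorem isSubgradientAt_leastSquares (M : Matrix κ ι ℝ) (y : κ → ℝ) (u : ι → ℝ) :
    IsSubgradientAt (fun x => (leastSquares M y x : EReal)) u (Mᵀ *ᵥ (M *ᵥ u - y)) :=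
  isSubgradientAt_coe_iff.mpr fun z => by
    have h := leastSquares_add_smul M y u (z - u) 1
    rw [one_smul, add_sub_cancel] at h
    nlinarith [dotProduct_self_nonneg (M *ᵥ (z - u))]

theorem posDef_transpose_mul_add_smul_one [DecidableEq ι] (M : Matrix κ ι ℝ) {μ : ℝ}
    (hμ : 0 < μ) : (Mᵀ * M + μ • (1 : Matrix ι ι ℝ)).PosDef :=
  PosDef.posSemidef_add (by simpa using posSemidef_conjTranspose_mul_self M) (PosDef.one.smul hμ)

variable [DecidableEq ι]

noncomputable def leastSquaresProx (M : Matrix κ ι ℝ) (y : κ → ℝ) (μ : ℝ) (z : ι → ℝ) : ι → ℝ :=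
  (Mᵀ * M + μ • (1 : Matrix ι ι ℝ))⁻¹ *ᵥ (Mᵀ *ᵥ y + μ • z)

theorem leastSquaresProx_eq_iff {M : Matrix κ ι ℝ} {y : κ → ℝ} {μ : ℝ} (hμ : 0 < μ)
    {z x : ι → ℝ} :
    leastSquaresProx M y μ z = x ↔ Mᵀ *ᵥ (M *ᵥ x - y) = μ • (z - x) := by
  have hA := (posDef_transpose_mul_add_smul_one M hμ).isUnit
  rw [← (mulVec_injective_iff_isUnit.mpr hA).eq_iff, leastSquaresProx, mulVec_mulVec,
    mul_nonsing_inv _ ((isUnit_iff_isUnit_det _).mp hA), one_mulVec, add_mulVec,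
    ← mulVec_mulVec, smul_mulVec, one_mulVec, mulVec_sub, smul_sub, sub_eq_sub_iff_add_eq_add,
    eq_comm, add_comm (μ • z)]

theorem continuous_leastSquaresProx (M : Matrix κ ι ℝ) (y : κ → ℝ) (μ : ℝ) :
    Continuous (leastSquaresProx M y μ) := by
  unfold leastSquaresProx; fun_prop

theorem isSubgradientAt_leastSquares_leastSquaresProx {M : Matrix κ ι ℝ} {y : κ → ℝ} {μ : ℝ}
    (hμ : 0 < μ) (z : ι → ℝ) :
    IsSubgradientAt (fun x => (leastSquares M y x : EReal)) (leastSquaresProx M y μ z)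
      (μ • (z - leastSquaresProx M y μ z)) :=
  (leastSquaresProx_eq_iff (M := M) (y := y) hμ).mp rfl ▸ isSubgradientAt_leastSquares M y _

end LeastSquares

theorem dotProduct_self_le_of_monotone_pairs {ι : Type*} [Fintype ι] {z u v zb ub : ι → ℝ}
    {s : ℝ} (hs : 0 ≤ s) (hF : 0 ≤ (z - u - (zb - ub)) ⬝ᵥ (u - ub))
    (hG : 0 ≤ (2 • u - z - v - (ub - zb)) ⬝ᵥ (v - ub)) :
    (z + s • (v - u) - zb) ⬝ᵥ (z + s • (v - u) - zb) ≤
      (z - zb) ⬝ᵥ (z - zb) - s * (2 - s) * (v - u) ⬝ᵥ (v - u) := by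
  have key : (z + s • (v - u) - zb) ⬝ᵥ (z + s • (v - u) - zb) =
      (z - zb) ⬝ᵥ (z - zb) - s * (2 - s) * (v - u) ⬝ᵥ (v - u)
        - 2 * s * ((z - u - (zb - ub)) ⬝ᵥ (u - ub) + (2 • u - z - v - (ub - zb)) ⬝ᵥ (v - ub)) := by
    simp only [two_nsmul, dotProduct, Pi.add_apply, Pi.sub_apply, Pi.smul_apply, smul_eq_mul,
      Finset.mul_sum, ← Finset.sum_add_distrib, ← Finset.sum_sub_distrib]
    exact Finset.sum_congr rfl fun j _ => by ring
  rw [key]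
  nlinarith

section DouglasRachford

variable {ι κ : Type*} [Fintype ι] [Fintype κ] [DecidableEq ι] {M : Matrix κ ι ℝ} {y : κ → ℝ}
  {μ : ℝ} {G : (ι → ℝ) → EReal}

variable (M y μ G) in
/-- `z` is fixed by the Douglas–Rachford iteration iff `leastSquaresProx M y μ z` is also the
`G`-proximal point of `2 • leastSquaresProx M y μ z - z`. -/
def drFixedPoints : Set (ι → ℝ) :=
  {z | IsSubgradientAt G (leastSquaresProx M y μ z) (μ • (leastSquaresProx M y μ z - z))}

theorem isMin_of_mem_drFixedPoints (hμ : 0 < μ) {z : ι → ℝ} (hz : z ∈ drFixedPoints M y μ G)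
    (x : ι → ℝ) :
    (leastSquares M y (leastSquaresProx M y μ z) : EReal) + G (leastSquaresProx M y μ z) ≤
      (leastSquares M y x : EReal) + G x :=
  (isSubgradientAt_leastSquares_leastSquaresProx hμ z).add_le_add_of_neg
    (by rwa [← smul_neg, neg_sub]) x

theorem nonempty_drFixedPoints (hμ : 0 < μ) (hG : Convex ℝ {q : (ι → ℝ) × ℝ | G q.1 ≤ q.2})
    (hG_ne_bot : ∀ x, G x ≠ ⊥) (hproper : ∃ x, G x ≠ ⊤)
    (hmin : ∃ x, ∀ w, (leastSquares M y x : EReal) + G x ≤ leastSquares M y w + G w) :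
    (drFixedPoints M y μ G).Nonempty := by
  obtain ⟨x, hx⟩ := hmin
  set g := Mᵀ *ᵥ (M *ᵥ x - y)
  have hprox : leastSquaresProx M y μ (x + μ⁻¹ • g) = x := by
    rw [leastSquaresProx_eq_iff hμ, add_sub_cancel_left, smul_inv_smul₀ hμ.ne']
  refine ⟨x + μ⁻¹ • g, ?_⟩
  rw [drFixedPoints, Set.mem_ofPred_eq, hprox, sub_add_cancel_left, smul_neg,
    smul_inv_smul₀ hμ.ne']
  exact isSubgradientAt_neg_of_isMin_add _ hG (hG_ne_bot x) hproper
    (fun d t => (leastSquares_add_smul M y x d t).le) hx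

theorem drStep_fejer (hμ : 0 < μ) {s : ℝ} (hs : 0 ≤ s) {z v zb : ι → ℝ}
    (hv : IsSubgradientAt G v (μ • (2 • leastSquaresProx M y μ z - z - v)))
    (hzb : zb ∈ drFixedPoints M y μ G) :
    (z + s • (v - leastSquaresProx M y μ z) - zb) ⬝ᵥ (z + s • (v - leastSquaresProx M y μ z) - zb)
      ≤ (z - zb) ⬝ᵥ (z - zb) -
        s * (2 - s) * (v - leastSquaresProx M y μ z) ⬝ᵥ (v - leastSquaresProx M y μ z) := by
  have hF := (isSubgradientAt_leastSquares_leastSquaresProx (M := M) (y := y) hμ z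
    ).dotProduct_sub_nonneg (isSubgradientAt_leastSquares_leastSquaresProx hμ zb)
  have hG := hv.dotProduct_sub_nonneg hzb
  rw [← smul_sub, smul_dotProduct, smul_eq_mul] at hF hG
  exact dotProduct_self_le_of_monotone_pairs hs ((mul_nonneg_iff_of_pos_left hμ).mp hF)
    ((mul_nonneg_iff_of_pos_left hμ).mp hG)

theorem mem_drFixedPoints_of_tendsto (hG_lsc : LowerSemicontinuous G) (hG_ne_bot : ∀ x, G x ≠ ⊥)
    {z v : ℕ → ι → ℝ}
    (hv : ∀ k, IsSubgradientAt G (v k) (μ • (2 • leastSquaresProx M y μ (z k) - z k - v k)))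
    (hvu : Tendsto (fun k => v k - leastSquaresProx M y μ (z k)) atTop (𝓝 0))
    {φ : ℕ → ℕ} (hφ : Tendsto φ atTop atTop) {zb : ι → ℝ}
    (hz : Tendsto (z ∘ φ) atTop (𝓝 zb)) : zb ∈ drFixedPoints M y μ G := by
  set ub := leastSquaresProx M y μ zb
  have hu : Tendsto (fun k => leastSquaresProx M y μ (z (φ k))) atTop (𝓝 ub) :=
    ((continuous_leastSquaresProx M y μ).tendsto zb).comp hz
  have hv' : Tendsto (fun k => v (φ k)) atTop (𝓝 ub) := by
    simpa using hu.add (hvu.comp hφ)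
  have hg := (((hu.const_smul 2).sub hz).sub hv').const_smul μ
  rw [two_nsmul, add_sub_right_comm, add_sub_cancel_right] at hg
  exact IsSubgradientAt.of_tendsto hG_lsc (hG_ne_bot ub) hv' hg fun k => hv (φ k)

end DouglasRachford

/-- Convergence of the (relaxed) Douglas–Rachford splitting algorithm applied to
`F + G`, where `F(x) = (1/2)‖Mx − y‖₂²` and `G : ℝⁿ → ℝ ∪ {+∞}` is proper, convex and
lower semicontinuous, assuming `F + G` attains its minimum. The iteration is
`n_k = (MᵀM + μI)⁻¹(Mᵀy + μ z_k)`, `z̃_k ∈ argmin_z (μ/2)‖(2n_k − z_k) − z‖₂² + G(z)`,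
`z_{k+1} = z_k + s(z̃_k − n_k)` with `μ > 0` and relaxation parameter `s ∈ (0,2)`.
Then `(n_k)` converges to a minimizer of `F + G`. -/
theorem douglasRachford_converges_to_minimizer (p n : ℕ)
    (M : Matrix (Fin p) (Fin n) ℝ) (y : Fin p → ℝ)
    (F : (Fin n → ℝ) → ℝ)
    (hF : ∀ x, F x = (1 / 2) * ∑ i, (M.mulVec x i - y i) ^ 2)
    (G : (Fin n → ℝ) → EReal)
    (hG_ne_bot : ∀ x, G x ≠ ⊥)
    (hG_proper : ∃ x, G x ≠ ⊤)
    (hG_convex : Convex ℝ {q : (Fin n → ℝ) × ℝ | G q.1 ≤ (q.2 : EReal)})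
    (hG_lsc : LowerSemicontinuous G)
    (hmin : ∃ xstar : Fin n → ℝ, ∀ x, (F xstar : EReal) + G xstar ≤ (F x : EReal) + G x)
    (μ s : ℝ) (hμ : 0 < μ) (hs0 : 0 < s) (hs2 : s < 2)
    (nk ztilde zk : ℕ → (Fin n → ℝ))
    (h1 : ∀ k, nk k = (Mᵀ * M + μ • (1 : Matrix (Fin n) (Fin n) ℝ))⁻¹.mulVec
        (Mᵀ.mulVec y + μ • zk k))
    (h2 : ∀ k, ∀ z : Fin n → ℝ,
        ((μ / 2) * ∑ j, ((2 • nk k - zk k) j - ztilde k j) ^ 2 : ℝ) + G (ztilde k) ≤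
        ((μ / 2) * ∑ j, ((2 • nk k - zk k) j - z j) ^ 2 : ℝ) + G z)
    (h3 : ∀ k, zk (k + 1) = zk k + s • (ztilde k - nk k)) :
    ∃ nlim : Fin n → ℝ,
      Tendsto nk atTop (𝓝 nlim) ∧
      ∀ x, (F nlim : EReal) + G nlim ≤ (F x : EReal) + G x := by
  obtain rfl : F = leastSquares M y := funext fun x => by
    rw [hF, leastSquares, ← sum_sq_sub_eq_dotProduct]
  obtain rfl : nk = fun k => leastSquaresProx M y μ (zk k) := funext h1
  have hv : ∀ k, IsSubgradientAt G (ztilde k)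
      (μ • (2 • leastSquaresProx M y μ (zk k) - zk k - ztilde k)) := fun k =>
    isSubgradientAt_of_isMin_prox hG_convex hG_proper (hG_ne_bot _)
      (by simpa only [sum_sq_sub_eq_dotProduct] using h2 k)
  have hfejer : ∀ zb ∈ drFixedPoints M y μ G, ∀ k,
      (zk (k + 1) - zb) ⬝ᵥ (zk (k + 1) - zb) ≤ (zk k - zb) ⬝ᵥ (zk k - zb) - s * (2 - s) *
        (ztilde k - leastSquaresProx M y μ (zk k)) ⬝ᵥ
          (ztilde k - leastSquaresProx M y μ (zk k)) := fun zb hzb k =>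
    h3 k ▸ drStep_fejer hμ hs0.le (hv k) hzb
  have hc : 0 < s * (2 - s) := mul_pos hs0 (sub_pos.mpr hs2)
  obtain ⟨p₀, hp₀⟩ := nonempty_drFixedPoints hμ hG_convex hG_ne_bot hG_proper hmin
  have hvu := tendsto_zero_of_le_sub_mul (Q := fun k => (zk k - p₀) ⬝ᵥ (zk k - p₀))
    (hfejer p₀ hp₀) hc (fun k => dotProduct_self_nonneg _) (fun k => dotProduct_self_nonneg _)
  obtain ⟨zb, hzb, hz⟩ := exists_tendsto_of_antitone_dotProduct_self_sub ⟨p₀, hp₀⟩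
    (fun p hp => antitone_nat_of_succ_le fun k => (hfejer p hp k).trans
      (sub_le_self _ (mul_nonneg hc.le (dotProduct_self_nonneg _))))
    (fun p φ hφ hzφ => mem_drFixedPoints_of_tendsto hG_lsc hG_ne_bot hv
      (tendsto_of_dotProduct_self_sub_tendsto_zero (by simpa using hvu)) hφ.tendsto_atTop hzφ)
  exact ⟨_, ((continuous_leastSquaresProx M y μ).tendsto zb).comp hz,
    isMin_of_mem_drFixedPoints hμ hzb⟩
end

section
/- Let M ∈ ℝ^{p × n}, let λ > 0 and 0 ≤ t, and let P ∈ ℝ^{n × n} be an orthogonal projection (P² = P and Pᵀ = P) that commutes with MᵀM (i.e. P MᵀM = MᵀM P). Assume ‖Mx‖₂² ≤ λ‖x‖₂² for all x ∈ ℝ^n and ‖M(x − Px)‖₂² ≤ t‖x − Px‖₂² for all x ∈ ℝ^n, and suppose t < λ. Then every vector v ∈ ℝ^n satisfying the restricted-isometry-type lower bound ‖Mv‖₂² ≥ (1 − δ)‖v‖₂² with t < 1 − δ ≤ λ obeys ‖Pv‖₂² ≥ ((1 − δ) − t)/(λ − t) · ‖v‖₂². -/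
open Matrix Finset

/-- If `P` is an orthogonal projection commuting with `MᵀM`, `‖Mx‖₂² ≤ λ‖x‖₂²` for all `x`,
`‖M(x − Px)‖₂² ≤ t‖x − Px‖₂²` for all `x`, and `t < λ`, then every vector `v` satisfying the
restricted-isometry-type lower bound `‖Mv‖₂² ≥ (1 − δ)‖v‖₂²` with `t < 1 − δ ≤ λ` obeys
`‖Pv‖₂² ≥ ((1 − δ) − t)/(λ − t) · ‖v‖₂²`. -/
theorem rip_lower_bound_forces_leading_singular_components (p n : ℕ)
    (M : Matrix (Fin p) (Fin n) ℝ) (lam t : ℝ) (hlam : 0 < lam) (ht : 0 ≤ t)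
    (P : Matrix (Fin n) (Fin n) ℝ)
    (hProj : P * P = P) (hPsym : Pᵀ = P)
    (hComm : P * (Mᵀ * M) = (Mᵀ * M) * P)
    (hUpper : ∀ x : Fin n → ℝ, ∑ i, (M.mulVec x i) ^ 2 ≤ lam * ∑ j, (x j) ^ 2)
    (hTail : ∀ x : Fin n → ℝ,
        ∑ i, (M.mulVec (x - P.mulVec x) i) ^ 2 ≤ t * ∑ j, ((x - P.mulVec x) j) ^ 2)
    (htlam : t < lam)
    (δ : ℝ) (htδ : t < 1 - δ) (hδlam : 1 - δ ≤ lam)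
    (v : Fin n → ℝ)
    (hRIP : (1 - δ) * ∑ j, (v j) ^ 2 ≤ ∑ i, (M.mulVec v i) ^ 2) :
    ((1 - δ) - t) / (lam - t) * ∑ j, (v j) ^ 2 ≤ ∑ j, (P.mulVec v j) ^ 2 := by
  have hlt : (0:ℝ) < lam - t := by linarith
  set q := P.mulVec v with hqdef
  have hsq : ∀ x : Fin n → ℝ, ∑ j, x j ^ 2 = x ⬝ᵥ x := by
    intro x; simp [dotProduct, sq]
  have hsq' : ∀ x : Fin p → ℝ, ∑ i, x i ^ 2 = x ⬝ᵥ x := by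
    intro x; simp [dotProduct, sq]
  have hPq : P.mulVec q = q := by
    rw [hqdef, Matrix.mulVec_mulVec, hProj]
  have hsymm : ∀ x y : Fin n → ℝ, x ⬝ᵥ P.mulVec y = (P.mulVec x) ⬝ᵥ y := by
    intro x y
    rw [Matrix.dotProduct_mulVec]
    congr 1
    rw [← hPsym, Matrix.vecMul_transpose, hPsym]
  have hMM : ∀ x y : Fin n → ℝ,
      (M.mulVec x) ⬝ᵥ (M.mulVec y) = ((Mᵀ * M).mulVec x) ⬝ᵥ y := by
    intro x y
    rw [Matrix.dotProduct_mulVec]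
    congr 1
    have : M.mulVec x ᵥ* M = Mᵀ.mulVec (M.mulVec x) := by
      rw [Matrix.mulVec_transpose]
    rw [this, Matrix.mulVec_mulVec]
  -- cross term for the norm split
  have hcross0 : q ⬝ᵥ (v - q) = 0 := by
    have h1 : q ⬝ᵥ v = q ⬝ᵥ q := by
      have h := hsymm q v
      rw [hPq, ← hqdef] at h
      exact h.symm
    rw [dotProduct_sub, h1, sub_self]
  -- cross term for the image split
  have hMcross0 : (M.mulVec q) ⬝ᵥ (M.mulVec (v - q)) = 0 := by
    rw [hMM]
    have hc : (Mᵀ * M).mulVec q = P.mulVec ((Mᵀ * M).mulVec v) := by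
      rw [hqdef, Matrix.mulVec_mulVec, Matrix.mulVec_mulVec, hComm]
    rw [hc, ← hsymm]
    have : P.mulVec (v - q) = 0 := by
      rw [Matrix.mulVec_sub, hPq, hqdef, sub_self]
    rw [this, dotProduct_zero]
  -- norm splits
  have hvsplit : ∑ j, v j ^ 2 = (∑ j, q j ^ 2) + ∑ j, (v - q) j ^ 2 := by
    have hv : v = q + (v - q) := by ring
    rw [hsq v, hsq q, hsq (v - q)]
    calc v ⬝ᵥ v = (q + (v - q)) ⬝ᵥ (q + (v - q)) := by rw [← hv]
      _ = q ⬝ᵥ q + q ⬝ᵥ (v - q) + ((v - q) ⬝ᵥ q + (v - q) ⬝ᵥ (v - q)) := by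
          rw [add_dotProduct, dotProduct_add, dotProduct_add]
      _ = q ⬝ᵥ q + (v - q) ⬝ᵥ (v - q) := by
          rw [hcross0, dotProduct_comm (v - q) q, hcross0]; ring
  have hMsplit : ∑ i, (M.mulVec v) i ^ 2
      = (∑ i, (M.mulVec q) i ^ 2) + ∑ i, (M.mulVec (v - q)) i ^ 2 := by
    have hv : M.mulVec v = M.mulVec q + M.mulVec (v - q) := by
      rw [← Matrix.mulVec_add]; congr 1; ring
    rw [hsq' (M.mulVec v), hsq' (M.mulVec q), hsq' (M.mulVec (v - q)), hv]
    rw [add_dotProduct, dotProduct_add, dotProduct_add,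
      hMcross0, dotProduct_comm (M.mulVec (v - q)) (M.mulVec q), hMcross0]
    ring
  have h1 := hUpper q
  have h2 := hTail v
  rw [← hqdef] at h2
  have hW : (0:ℝ) ≤ ∑ j, (v - q) j ^ 2 := by positivity
  rw [div_mul_eq_mul_div, div_le_iff₀ hlt]
  nlinarith [hRIP, hMsplit, hvsplit, h1, h2]
end
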